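/- Let O be a finite set, w a weight on K_O, and T a minimum spanning tree of w. Then T is also a minimum spanning tree of the single linkage ultra-metric SL(w). -/

import Mathlib

open SimpleGraph Finset

variable {V : Type*} [Fintype V] [DecidableEq V]

/-- Total weight of (the edge set of) a simple graph `T` under edge weights `w`. -/
noncomputable def totalWeight (w : Sym2 V → ℝ) (T : SimpleGraph V) : ℝ :=
  ∑ e ∈ (Set.toFinite T.edgeSet).toFinset, w e

/-- `T` is a minimum spanning tree of the complete graph on `V` with weights `w`. -/
def IsMST (w : Sym2 V → ℝ) (T : SimpleGraph V) : Prop :=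
  T.IsTree ∧ ∀ T' : SimpleGraph V, T'.IsTree → totalWeight w T ≤ totalWeight w T'

/-- A weight on the complete graph: nonnegative, vanishing on the diagonal. -/
def IsWeight (d : Sym2 V → ℝ) : Prop :=
  (∀ e, 0 ≤ d e) ∧ ∀ x : V, d s(x, x) = 0

/-- An ultra-metric, encoded as a function on unordered pairs. -/
def IsUltrametric (u : Sym2 V → ℝ) : Prop :=
  IsWeight u ∧ ∀ x y z : V, u s(x, z) ≤ max (u s(x, y)) (u s(y, z))

/-- A (pseudo-)metric, encoded as a function on unordered pairs. -/
def IsMetric (d : Sym2 V → ℝ) : Prop :=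
  IsWeight d ∧ ∀ x y z : V, d s(x, z) ≤ d s(x, y) + d s(y, z)

/-- The single linkage ultra-metric of a weight `d`. -/
noncomputable def SL (d : Sym2 V → ℝ) (e : Sym2 V) : ℝ :=
  sSup {r | ∃ u : Sym2 V → ℝ, IsUltrametric u ∧ u ≤ d ∧ u e = r}

/-- Maximum weight of an edge along a walk (0 for the empty walk). -/
noncomputable def pathMax (w : Sym2 V → ℝ) {T : SimpleGraph V} {x y : V}
    (p : T.Walk x y) : ℝ :=
  (p.edges.map w).foldr max 0

/-- Sum of weights of the edges along a walk. -/
noncomputable def pathSum (w : Sym2 V → ℝ) {T : SimpleGraph V} {x y : V}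
    (p : T.Walk x y) : ℝ :=
  (p.edges.map w).sum

/-- `alpha T hT w x y`: max weight of an edge on the unique path in the tree `T` from `x` to `y`. -/
noncomputable def alpha (T : SimpleGraph V) (hT : T.IsTree) (w : Sym2 V → ℝ)
    (x y : V) : ℝ :=
  pathMax w (hT.existsUnique_path x y).exists.choose

/-- `omega T hT w x y`: the tree metric, the sum of weights along the unique path in `T`. -/
noncomputable def treeOmega (T : SimpleGraph V) (hT : T.IsTree) (w : Sym2 V → ℝ)
    (x y : V) : ℝ :=
  pathSum w (hT.existsUnique_path x y).exists.choose

/-- Ultra-metric as a two-variable function. -/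
def IsUltrametricFn (u : V → V → ℝ) : Prop :=
  (∀ x y, 0 ≤ u x y) ∧ (∀ x, u x x = 0) ∧ (∀ x y, u x y = u y x) ∧
    ∀ x y z, u x z ≤ max (u x y) (u y z)

/-!
Let `α(x, y)` be the largest `w`-weight on the `T`-path from `x` to `y`. Since `T` is a minimum
spanning tree, every edge on that path weighs at most `w s(x, y)` (otherwise exchanging it for
`s(x, y)` would give a lighter spanning tree), so `α` is an ultrametric below `w` and therefore
`α ≤ SL w ≤ w`. Hence, for an edge `e` of `T` on the `T`-path from `x` to `y`,
`SL w e ≤ w e ≤ α(x, y) ≤ SL w s(x, y)`: the tree `T` has the cycle property for `SL w`.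
Conversely, the usual exchange argument shows that a spanning tree with the cycle property is
minimal.
-/

section

omit [Fintype V] [DecidableEq V]

variable {G H S T : SimpleGraph V} {a b x y : V} {e : Sym2 V} {w : Sym2 V → ℝ}

namespace SimpleGraph

theorem Walk.exists_mem_edges_not_reachable (p : H.Walk a b) (hab : ¬ G.Reachable a b) :
    ∃ x y, s(x, y) ∈ p.edges ∧ ¬ G.Reachable x y := by
  induction p with
  | nil => exact absurd .rfl hab
  | @cons a c b hac p ih =>
    by_cases hc : G.Reachable a c
    · obtain ⟨x, y, hxy, hnxy⟩ := ih fun hcb => hab (hc.trans hcb)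
      exact ⟨x, y, List.mem_cons_of_mem _ hxy, hnxy⟩
    · exact ⟨a, c, by simp, hc⟩

theorem Connected.reachable_deleteEdges_or (hG : G.Connected) (u v c : V) :
    (G.deleteEdges {s(u, v)}).Reachable c u ∨ (G.deleteEdges {s(u, v)}).Reachable c v := by
  set D := G.deleteEdges {s(u, v)}
  by_contra! hc
  obtain ⟨p⟩ := hG.preconnected c u
  obtain ⟨d, -, ⟨hu, hv⟩, hd⟩ := p.exists_boundary_dart
    {z | ¬ D.Reachable z u ∧ ¬ D.Reachable z v} hc fun h => h.1 .rfl
  by_cases he : s(d.fst, d.snd) = s(u, v)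
  · rcases Sym2.eq_iff.1 he with ⟨rfl, -⟩ | ⟨rfl, -⟩
    exacts [hu .rfl, hv .rfl]
  · have hadj : D.Adj d.fst d.snd := by simp [D, d.adj, he]
    exact hd ⟨fun h => hu (hadj.reachable.trans h), fun h => hv (hadj.reachable.trans h)⟩

theorem IsAcyclic.mem_edges_iff_not_reachable_deleteEdges (hG : G.IsAcyclic) {p : G.Walk a b}
    (hp : p.IsPath) : e ∈ p.edges ↔ ¬ (G.deleteEdges {e}).Reachable a b := by
  classical
  refine ⟨fun he => ?_, p.mem_edges_of_not_reachable_deleteEdges⟩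
  cases e with | h u v
  rw [reachable_deleteEdges_iff_exists_walk]
  rintro ⟨q, hq⟩
  have hpq : p = q.toPath := congrArg Subtype.val ((hG.subsingleton_path a b).elim ⟨p, hp⟩ q.toPath)
  exact hq (q.edges_toPath_subset_edges (hpq ▸ he))

theorem IsTree.deleteEdges_sup_edge (hS : S.IsTree)
    (hab : ¬ (S.deleteEdges {e}).Reachable a b) : (S.deleteEdges {e} ⊔ edge a b).IsTree := by
  cases e with | h u v
  set D := S.deleteEdges {s(u, v)}
  have hD : D ≤ D ⊔ edge a b := le_sup_left
  have hne : a ≠ b := by rintro rfl; exact hab .rfl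
  have hab' : (D ⊔ edge a b).Reachable a b := Adj.reachable (by simp [edge_adj, hne])
  have huv : (D ⊔ edge a b).Reachable u v := by
    rcases hS.connected.reachable_deleteEdges_or u v a with ha | ha <;>
      rcases hS.connected.reachable_deleteEdges_or u v b with hb | hb
    · exact absurd (ha.trans hb.symm) hab
    · exact (ha.mono hD).symm.trans (hab'.trans (hb.mono hD))
    · exact (hb.mono hD).symm.trans (hab'.symm.trans (ha.mono hD))
    · exact absurd (ha.trans hb.symm) hab
  refine ⟨(connected_iff_exists_forall_reachable _).2 ⟨u, fun c => ?_⟩,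
    (hS.isAcyclic.anti (deleteEdges_le _)).sup_edge_of_not_reachable hab⟩
  rcases hS.connected.reachable_deleteEdges_or u v c with h | h
  · exact (h.mono hD).symm
  · exact huv.trans (h.mono hD).symm

end SimpleGraph

theorem pathMax_le_iff {p : G.Walk x y} {c : ℝ} :
    pathMax w p ≤ c ↔ 0 ≤ c ∧ ∀ e ∈ p.edges, w e ≤ c := by
  unfold pathMax
  generalize p.edges = l
  induction l with
  | nil => simp
  | cons f l ih => simp [ih, and_left_comm]

theorem alpha_le_iff (hT : T.IsTree) {c : ℝ} :
    alpha T hT w x y ≤ c ↔ 0 ≤ c ∧ ∀ e, ¬ (T.deleteEdges {e}).Reachable x y → w e ≤ c := by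
  simp only [alpha, pathMax_le_iff, hT.isAcyclic.mem_edges_iff_not_reachable_deleteEdges
    (hT.existsUnique_path x y).exists.choose_spec]

theorem alpha_nonneg (hT : T.IsTree) : 0 ≤ alpha T hT w x y :=
  ((alpha_le_iff hT).1 le_rfl).1

theorem le_alpha (hT : T.IsTree) (he : ¬ (T.deleteEdges {e}).Reachable x y) :
    w e ≤ alpha T hT w x y :=
  ((alpha_le_iff hT).1 le_rfl).2 e he

theorem alpha_self (hT : T.IsTree) (x : V) : alpha T hT w x x = 0 :=
  le_antisymm ((alpha_le_iff hT).2 ⟨le_rfl, fun _ h => absurd .rfl h⟩) (alpha_nonneg hT)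

theorem alpha_comm (hT : T.IsTree) (x y : V) : alpha T hT w x y = alpha T hT w y x :=
  le_antisymm ((alpha_le_iff hT).2 ⟨alpha_nonneg hT, fun _ h => le_alpha hT (mt .symm h)⟩)
    ((alpha_le_iff hT).2 ⟨alpha_nonneg hT, fun _ h => le_alpha hT (mt .symm h)⟩)

theorem alpha_le_max (hT : T.IsTree) (x y z : V) :
    alpha T hT w x z ≤ max (alpha T hT w x y) (alpha T hT w y z) := by
  refine (alpha_le_iff hT).2 ⟨le_max_of_le_left (alpha_nonneg hT), fun e hxz => ?_⟩
  by_cases hxy : (T.deleteEdges {e}).Reachable x y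
  · exact le_max_of_le_right (le_alpha hT fun hyz => hxz (hxy.trans hyz))
  · exact le_max_of_le_left (le_alpha hT hxy)

theorem isUltrametric_alpha (hT : T.IsTree) (w : Sym2 V → ℝ) :
    IsUltrametric (Sym2.lift ⟨alpha T hT w, alpha_comm hT⟩) :=
  ⟨⟨Sym2.ind fun _ _ => alpha_nonneg hT, alpha_self hT⟩, alpha_le_max hT⟩

theorem isUltrametric_zero : IsUltrametric (0 : Sym2 V → ℝ) :=
  ⟨⟨fun _ => le_rfl, fun _ => rfl⟩, fun _ _ _ => by simp⟩

theorem le_SL {u : Sym2 V → ℝ} (hu : IsUltrametric u) (huw : u ≤ w) (e : Sym2 V) :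
    u e ≤ SL w e :=
  le_csSup ⟨w e, by rintro _ ⟨v, -, hvw, rfl⟩; exact hvw e⟩ ⟨u, hu, huw, rfl⟩

theorem SL_le (hw : ∀ e, 0 ≤ w e) (e : Sym2 V) : SL w e ≤ w e :=
  csSup_le ⟨0, 0, isUltrametric_zero, hw, rfl⟩ fun _ ⟨_, _, huw, hue⟩ => hue ▸ huw e

end

section Weights

omit [DecidableEq V]

variable {w : Sym2 V → ℝ} {S T : SimpleGraph V} {a b x y : V} {e : Sym2 V}

theorem totalWeight_deleteEdges_sup_edge (w : Sym2 V → ℝ) (he : e ∈ S.edgeSet)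
    (hab : ¬ (S.deleteEdges {e}).Reachable a b) :
    totalWeight w (S.deleteEdges {e} ⊔ edge a b) = totalWeight w S - w e + w s(a, b) := by
  classical
  have hne : a ≠ b := by rintro rfl; exact hab .rfl
  have hnew : s(a, b) ∉ (S.deleteEdges {e}).edgeSet := fun h => hab (Adj.reachable h)
  have hedges : (Set.toFinite (S.deleteEdges {e} ⊔ edge a b).edgeSet).toFinset =
      insert s(a, b) ((Set.toFinite S.edgeSet).toFinset.erase e) := by
    ext f
    simp [edgeSet_sup, edgeSet_edge_of_ne hne, and_comm]
  rw [totalWeight, hedges, Finset.sum_insert fun h => hnew (by simpa [and_comm] using h),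
    Finset.sum_erase_eq_sub (by simpa using he), totalWeight]
  ring

theorem ncard_edgeSet_deleteEdges_sup_edge_diff_lt (he : e ∈ S.edgeSet \ T.edgeSet)
    (hab : T.Adj a b) :
    ((S.deleteEdges {e} ⊔ edge a b).edgeSet \ T.edgeSet).ncard < (S.edgeSet \ T.edgeSet).ncard := by
  refine lt_of_le_of_lt (Set.ncard_le_ncard ?_) (Set.ncard_sdiff_singleton_lt_of_mem he)
  intro f hf
  simp only [edgeSet_sup, edgeSet_deleteEdges, Set.mem_sdiff, Set.mem_union] at hf
  rcases hf with ⟨⟨hfS, hfe⟩ | hfab, hfT⟩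
  · exact ⟨⟨hfS, hfT⟩, hfe⟩
  · rw [Set.mem_singleton_iff.1 (edgeSet_edge_subset hfab)] at hfT
    exact absurd hab hfT

/-- The cycle property of a tree `T`, with "`e` lies on the `T`-path from `x` to `y`" expressed as
"`e` separates `x` from `y` in `T`". -/
def HasCycleProperty (w : Sym2 V → ℝ) (T : SimpleGraph V) : Prop :=
  ∀ e x y, ¬ (T.deleteEdges {e}).Reachable x y → w e ≤ w s(x, y)

theorem IsMST.hasCycleProperty (hT : IsMST w T) : HasCycleProperty w T := by
  intro e x y hxy
  obtain ⟨p⟩ := hT.1.connected.preconnected x y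
  have he : e ∈ T.edgeSet := p.edges_subset_edgeSet (p.mem_edges_of_not_reachable_deleteEdges hxy)
  have hle := hT.2 _ (hT.1.deleteEdges_sup_edge hxy)
  rw [totalWeight_deleteEdges_sup_edge w he hxy] at hle
  linarith

theorem HasCycleProperty.exists_isTree_totalWeight_le (hw : HasCycleProperty w T)
    (hT : T.IsTree) (hS : S.IsTree) (hTS : ¬ T ≤ S) :
    ∃ S' : SimpleGraph V, S'.IsTree ∧ totalWeight w S' ≤ totalWeight w S ∧
      (S'.edgeSet \ T.edgeSet).ncard < (S.edgeSet \ T.edgeSet).ncard := by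
  obtain ⟨a, b, hab, habS⟩ : ∃ a b, T.Adj a b ∧ ¬ S.Adj a b := by
    simpa [le_iff_adj] using hTS
  have hTab : ¬ (T.deleteEdges {s(a, b)}).Reachable a b :=
    isAcyclic_iff_forall_adj_isBridge.1 hT.isAcyclic hab
  obtain ⟨p, hp⟩ := (hS.existsUnique_path a b).exists
  obtain ⟨x, y, hxy, hTxy⟩ := p.exists_mem_edges_not_reachable hTab
  have hxyS : s(x, y) ∈ S.edgeSet := p.edges_subset_edgeSet hxy
  have hxyT : s(x, y) ∉ T.edgeSet := by
    refine fun hxyT => hTxy (Adj.reachable ?_)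
    have hne : s(x, y) ≠ s(a, b) := fun h => habS (show s(a, b) ∈ S.edgeSet from h ▸ hxyS)
    simpa [deleteEdges_adj, hne] using hxyT
  have hSab := (hS.isAcyclic.mem_edges_iff_not_reachable_deleteEdges hp).1 hxy
  refine ⟨_, hS.deleteEdges_sup_edge hSab, ?_,
    ncard_edgeSet_deleteEdges_sup_edge_diff_lt ⟨hxyS, hxyT⟩ hab⟩
  rw [totalWeight_deleteEdges_sup_edge w hxyS hSab]
  linarith [hw _ x y hTxy]

theorem HasCycleProperty.isMST (hw : HasCycleProperty w T) (hT : T.IsTree) : IsMST w T := by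
  refine ⟨hT, fun S hS => ?_⟩
  induction hn : (S.edgeSet \ T.edgeSet).ncard using Nat.strong_induction_on generalizing S with
  | _ n ih =>
    by_cases hTS : T ≤ S
    · rw [(isTree_iff_minimal_connected.1 hS).eq_of_le hT.connected hTS]
    · obtain ⟨S', hS', hle, hlt⟩ := hw.exists_isTree_totalWeight_le hT hS hTS
      exact (ih _ (hn ▸ hlt) S' hS' rfl).trans hle

theorem IsMST.alpha_le_SL (hw : ∀ e, 0 ≤ w e) (hT : IsMST w T) (x y : V) :
    alpha T hT.1 w x y ≤ SL w s(x, y) :=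
  le_SL (isUltrametric_alpha hT.1 w)
    (Sym2.ind fun a b => (alpha_le_iff hT.1).2 ⟨hw _, fun e => hT.hasCycleProperty e a b⟩) s(x, y)

end Weights

/-- an MST of `w` is also an MST of `SL w`. -/
theorem mst_of_SL (w : Sym2 V → ℝ) (hw : IsWeight w)
    (T : SimpleGraph V) (hT : IsMST w T) : IsMST (SL w) T := by
  refine HasCycleProperty.isMST (fun e x y hxy => ?_) hT.1
  calc SL w e ≤ w e := SL_le hw.1 e
    _ ≤ alpha T hT.1 w x y := le_alpha hT.1 hxy
    _ ≤ SL w s(x, y) := hT.alpha_le_SL hw.1 x y
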